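/- Consider the linearized ADMM setting with variables x^{k+1} ∈ ℝ^p, y^k, y^{k+1} ∈ ℝ^q, γ^k ∈ ℝ^n, matrices A ∈ ℝ^{n×p}, B ∈ ℝ^{n×q}, functions g : ℝ^p × ℝ^q → ℝ (L_g-Lipschitz differentiable), f : ℝ^p → ℝ, h : ℝ^q → ℝ (L_h-Lipschitz differentiable), and constants L_y > 0, β > 0. If y^{k+1} is a global minimizer of h̄^k, then L_β(x^{k+1}, y^k, γ^k) − L_β(x^{k+1}, y^{k+1}, γ^k) ≥ C1 ‖y^k − y^{k+1}‖², where C1 = (2L_y − L_w)/2 and L_w = L_g + L_h. -/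

import Mathlib

open Matrix Filter
open scoped RealInnerProductSpace

noncomputable section

abbrev Vec (m : ℕ) := EuclideanSpace ℝ (Fin m)

def mv {m l : ℕ} (M : Matrix (Fin m) (Fin l) ℝ) (v : Vec l) : Vec m := WithLp.toLp 2 (M.mulVec v)

def gradx {p q : ℕ} (g : Vec p → Vec q → ℝ) (x : Vec p) (y : Vec q) : Vec p :=
  gradient (fun x' => g x' y) x

def grady {p q : ℕ} (g : Vec p → Vec q → ℝ) (x : Vec p) (y : Vec q) : Vec q :=
  gradient (g x) y

def LipschitzDifferentiable {m : ℕ} (h : Vec m → ℝ) (L : ℝ) : Prop :=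
  Differentiable ℝ h ∧ ∀ y y' : Vec m, ‖gradient h y - gradient h y'‖ ≤ L * ‖y - y'‖

def LipschitzDifferentiable2 {p q : ℕ} (g : Vec p → Vec q → ℝ) (L : ℝ) : Prop :=
  (∀ y, Differentiable ℝ fun x => g x y) ∧ (∀ x, Differentiable ℝ (g x)) ∧
    ∀ x x' : Vec p, ∀ y y' : Vec q,
      Real.sqrt (‖gradx g x y - gradx g x' y'‖ ^ 2 + ‖grady g x y - grady g x' y'‖ ^ 2) ≤
        L * Real.sqrt (‖x - x'‖ ^ 2 + ‖y - y'‖ ^ 2)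

def Lagr {p q n : ℕ} (β : ℝ) (g : Vec p → Vec q → ℝ) (f : Vec p → ℝ) (h : Vec q → ℝ)
    (A : Matrix (Fin n) (Fin p) ℝ) (B : Matrix (Fin n) (Fin q) ℝ)
    (x : Vec p) (y : Vec q) (γ : Vec n) : ℝ :=
  g x y + f x + h y + ⟪γ, mv A x + mv B y⟫ + β / 2 * ‖mv A x + mv B y‖ ^ 2

def fbar {p q n : ℕ} (f : Vec p → ℝ) (g : Vec p → Vec q → ℝ)
    (A : Matrix (Fin n) (Fin p) ℝ) (B : Matrix (Fin n) (Fin q) ℝ) (β Lx : ℝ)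
    (xk : Vec p) (yk : Vec q) (γk : Vec n) (x : Vec p) : ℝ :=
  f x + ⟪γk, mv A x⟫ + Lx / 2 * ‖x - xk‖ ^ 2 +
    ⟪x - xk, gradx g xk yk + β • mv Aᵀ (mv A xk + mv B yk)⟫

def hbar {p q n : ℕ} (g : Vec p → Vec q → ℝ) (h : Vec q → ℝ)
    (A : Matrix (Fin n) (Fin p) ℝ) (B : Matrix (Fin n) (Fin q) ℝ) (β Ly : ℝ)
    (xk1 : Vec p) (yk : Vec q) (γk : Vec n) (y : Vec q) : ℝ :=
  ⟪γk, mv B y⟫ + Ly / 2 * ‖y - yk‖ ^ 2 + β / 2 * ‖mv A xk1 + mv B y‖ ^ 2 +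
    ⟪y - yk, grady g xk1 yk + gradient h yk⟫

def IsSmallestEigenvalue {m : ℕ} (M : Matrix (Fin m) (Fin m) ℝ) (lam : ℝ) : Prop :=
  (∃ v : Fin m → ℝ, v ≠ 0 ∧ M.mulVec v = lam • v) ∧
    ∀ μ : ℝ, (∃ v : Fin m → ℝ, v ≠ 0 ∧ M.mulVec v = μ • v) → lam ≤ μ

def IsLargestEigenvalue {m : ℕ} (M : Matrix (Fin m) (Fin m) ℝ) (lam : ℝ) : Prop :=
  (∃ v : Fin m → ℝ, v ≠ 0 ∧ M.mulVec v = lam • v) ∧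
    ∀ μ : ℝ, (∃ v : Fin m → ℝ, v ≠ 0 ∧ M.mulVec v = μ • v) → μ ≤ lam

def RegularSubgradientAt {m : ℕ} (f : Vec m → ℝ) (x₀ v : Vec m) : Prop :=
  ∀ ε > 0, ∀ᶠ x in nhds x₀, f x₀ + ⟪v, x - x₀⟫ - ε * ‖x - x₀‖ ≤ f x


/-
The objective `hbar` of the linearized `y`-step is an affine function plus the quadratic form
`v ↦ Ly/2 ‖v‖² + β/2 ‖B v‖²`. At its minimizer `yk1` the first-order term vanishes along the line
through `yk`, hence `hbar yk - hbar yk1 ≥ Ly/2 ‖yk - yk1‖²`. Up to terms independent of `y`,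
`L_β - hbar` is `w = g xk1 + h` minus its linearization at `yk` and minus `Ly/2 ‖y - yk‖²`, so
`L_β(yk) - L_β(yk1)` is this gap, plus `Ly/2 ‖yk - yk1‖²`, minus the linearization error of `w`,
which the descent lemma bounds by `(Lg + Lh)/2 ‖yk - yk1‖²` since `∇w` is `(Lg + Lh)`-Lipschitz.
-/

lemma eq_zero_of_forall_le_add_mul_add_sq_mul {a b c : ℝ}
    (h : ∀ t : ℝ, c ≤ c + t * b + t ^ 2 * a) : b = 0 := by
  have hmin : IsLocalMin (fun t : ℝ => c + t * b + t ^ 2 * a) 0 :=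
    Eventually.of_forall fun t => by simpa using h t
  have hderiv : HasDerivAt (fun t : ℝ => c + t * b + t ^ 2 * a) b 0 :=
    ((((hasDerivAt_id (0 : ℝ)).mul_const b).const_add c).add
      ((hasDerivAt_pow 2 (0 : ℝ)).mul_const a)).congr_deriv (by simp)
  exact hmin.hasDerivAt_eq_zero hderiv

section InnerProductSpace

variable {F : Type*} [NormedAddCommGroup F] [InnerProductSpace ℝ F]

lemma norm_add_smul_sq (a b : F) (t : ℝ) :
    ‖a + t • b‖ ^ 2 = ‖a‖ ^ 2 + 2 * t * ⟪a, b⟫ + t ^ 2 * ‖b‖ ^ 2 := by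
  rw [norm_add_sq_real, real_inner_smul_right, norm_smul, mul_pow, Real.norm_eq_abs, sq_abs]
  ring

variable [CompleteSpace F] {w : F → ℝ} {L : ℝ}

lemma gradient_fun_add {w' : F → ℝ} {x : F} (hw : DifferentiableAt ℝ w x)
    (hw' : DifferentiableAt ℝ w' x) :
    gradient (fun y => w y + w' y) x = gradient w x + gradient w' x := by
  simp only [gradient, fderiv_fun_add hw hw', map_add]

lemma inner_gradient_add_smul_sub_le
    (hlip : ∀ y y', ‖gradient w y - gradient w y'‖ ≤ L * ‖y - y'‖) (a u : F) {t : ℝ}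
    (ht : 0 ≤ t) :
    ⟪gradient w (a + t • u) - gradient w a, u⟫ ≤ L * ‖u‖ ^ 2 * t :=
  calc ⟪gradient w (a + t • u) - gradient w a, u⟫
      ≤ ‖gradient w (a + t • u) - gradient w a‖ * ‖u‖ := real_inner_le_norm _ _
    _ ≤ L * ‖t • u‖ * ‖u‖ := by
        gcongr
        simpa using hlip (a + t • u) a
    _ = L * ‖u‖ ^ 2 * t := by
        rw [norm_smul, Real.norm_of_nonneg ht]
        ring

theorem le_add_inner_gradient_add_sq (hw : Differentiable ℝ w)
    (hlip : ∀ y y', ‖gradient w y - gradient w y'‖ ≤ L * ‖y - y'‖) (a b : F) :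
    w b ≤ w a + ⟪gradient w a, b - a⟫ + L / 2 * ‖b - a‖ ^ 2 := by
  set u := b - a
  let ψ : ℝ → ℝ := fun t => w (a + t • u) - t * ⟪gradient w a, u⟫ - L / 2 * ‖u‖ ^ 2 * t ^ 2
  have hψ : ∀ t,
      HasDerivAt ψ (⟪gradient w (a + t • u) - gradient w a, u⟫ - L * ‖u‖ ^ 2 * t) t := by
    intro t
    have hline : HasDerivAt (fun t : ℝ => a + t • u) u t := by
      simpa using ((hasDerivAt_id t).smul_const u).const_add a
    have hφ : HasDerivAt (fun t => w (a + t • u)) ⟪gradient w (a + t • u), u⟫ t :=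
      (hw _).hasGradientAt.hasFDerivAt.comp_hasDerivAt t hline
    refine ((hφ.sub ((hasDerivAt_id t).mul_const ⟪gradient w a, u⟫)).sub
      ((hasDerivAt_pow 2 t).const_mul (L / 2 * ‖u‖ ^ 2))).congr_deriv ?_
    rw [inner_sub_left]
    push_cast
    ring
  have hanti : AntitoneOn ψ (Set.Icc 0 1) := by
    refine antitoneOn_of_deriv_nonpos (convex_Icc 0 1)
      (fun t _ => (hψ t).continuousAt.continuousWithinAt)
      (fun t _ => (hψ t).differentiableAt.differentiableWithinAt) fun t ht => ?_
    rw [interior_Icc] at ht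
    rw [(hψ t).deriv]
    linarith [inner_gradient_add_smul_sub_le hlip a u ht.1.le]
  have h01 := hanti (Set.left_mem_Icc.2 zero_le_one) (Set.right_mem_Icc.2 zero_le_one) zero_le_one
  simp only [ψ, zero_smul, add_zero, one_smul, u, add_sub_cancel] at h01
  linarith

end InnerProductSpace

lemma LipschitzDifferentiable.add {m : ℕ} {h₁ h₂ : Vec m → ℝ} {L₁ L₂ : ℝ}
    (h₁_lip : LipschitzDifferentiable h₁ L₁) (h₂_lip : LipschitzDifferentiable h₂ L₂) :
    LipschitzDifferentiable (fun y => h₁ y + h₂ y) (L₁ + L₂) := by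
  refine ⟨h₁_lip.1.add h₂_lip.1, fun y y' => ?_⟩
  rw [gradient_fun_add (h₁_lip.1 y) (h₂_lip.1 y), gradient_fun_add (h₁_lip.1 y') (h₂_lip.1 y')]
  calc ‖gradient h₁ y + gradient h₂ y - (gradient h₁ y' + gradient h₂ y')‖
      = ‖(gradient h₁ y - gradient h₁ y') + (gradient h₂ y - gradient h₂ y')‖ := by
        congr 1; abel
    _ ≤ L₁ * ‖y - y'‖ + L₂ * ‖y - y'‖ :=
        (norm_add_le _ _).trans (add_le_add (h₁_lip.2 y y') (h₂_lip.2 y y'))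
    _ = (L₁ + L₂) * ‖y - y'‖ := by ring

lemma LipschitzDifferentiable2.lipschitzDifferentiable_right {p q : ℕ}
    {g : Vec p → Vec q → ℝ} {L : ℝ} (hg : LipschitzDifferentiable2 g L) (x : Vec p) :
    LipschitzDifferentiable (g x) L := by
  refine ⟨hg.2.1 x, fun y y' => ?_⟩
  calc ‖gradient (g x) y - gradient (g x) y'‖
      = Real.sqrt (‖grady g x y - grady g x y'‖ ^ 2) := (Real.sqrt_sq (norm_nonneg _)).symm
    _ ≤ Real.sqrt (‖gradx g x y - gradx g x y'‖ ^ 2 + ‖grady g x y - grady g x y'‖ ^ 2) :=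
        Real.sqrt_le_sqrt (le_add_of_nonneg_left (sq_nonneg _))
    _ ≤ L * Real.sqrt (‖x - x‖ ^ 2 + ‖y - y'‖ ^ 2) := hg.2.2 x x y y'
    _ = L * ‖y - y'‖ := by simp [Real.sqrt_sq (norm_nonneg _)]

lemma mv_add {m l : ℕ} (M : Matrix (Fin m) (Fin l) ℝ) (v w : Vec l) :
    mv M (v + w) = mv M v + mv M w :=
  map_add (Matrix.toEuclideanLin M) v w

lemma mv_smul {m l : ℕ} (M : Matrix (Fin m) (Fin l) ℝ) (t : ℝ) (v : Vec l) :
    mv M (t • v) = t • mv M v :=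
  map_smul (Matrix.toEuclideanLin M) t v

section LinearizedADMM

variable {p q n : ℕ} {A : Matrix (Fin n) (Fin p) ℝ} {B : Matrix (Fin n) (Fin q) ℝ}
  {g : Vec p → Vec q → ℝ} {f : Vec p → ℝ} {h : Vec q → ℝ} {β Ly : ℝ}
  {x : Vec p} {yk : Vec q} {γ : Vec n}

variable (A B g h β Ly x yk γ) in
lemma hbar_add_smul (y v : Vec q) (t : ℝ) :
    hbar g h A B β Ly x yk γ (y + t • v) = hbar g h A B β Ly x yk γ y +
      t * (⟪γ, mv B v⟫ + Ly * ⟪y - yk, v⟫ + β * ⟪mv A x + mv B y, mv B v⟫ +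
        ⟪v, grady g x yk + gradient h yk⟫) +
      t ^ 2 * (Ly / 2 * ‖v‖ ^ 2 + β / 2 * ‖mv B v‖ ^ 2) := by
  have hy : y + t • v - yk = (y - yk) + t • v := by abel
  have hAB : mv A x + mv B (y + t • v) = (mv A x + mv B y) + t • mv B v := by
    rw [mv_add, mv_smul]; abel
  simp only [hbar]
  rw [hy, hAB, norm_add_smul_sq, norm_add_smul_sq, mv_add, mv_smul]
  simp only [inner_add_left, inner_add_right, real_inner_smul_left, real_inner_smul_right]
  ring

lemma hbar_sub_hbar_of_forall_le {ymin : Vec q}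
    (hmin : ∀ y, hbar g h A B β Ly x yk γ ymin ≤ hbar g h A B β Ly x yk γ y) (y : Vec q) :
    hbar g h A B β Ly x yk γ y - hbar g h A B β Ly x yk γ ymin =
      Ly / 2 * ‖y - ymin‖ ^ 2 + β / 2 * ‖mv B (y - ymin)‖ ^ 2 := by
  have hline := hbar_add_smul A B g h β Ly x yk γ ymin (y - ymin)
  have hfirst_order :=
    eq_zero_of_forall_le_add_mul_add_sq_mul fun t => (hmin _).trans_eq (hline t)
  have := hline 1
  rw [one_smul, add_sub_cancel, hfirst_order] at this
  linarith

variable (A B g f h β Ly x yk γ) in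
lemma lagr_sub_hbar (y : Vec q) :
    Lagr β g f h A B x y γ - hbar g h A B β Ly x yk γ y =
      g x y + h y + f x + ⟪γ, mv A x⟫ - Ly / 2 * ‖y - yk‖ ^ 2 -
        ⟪y - yk, grady g x yk + gradient h yk⟫ := by
  rw [Lagr, hbar, inner_add_right]
  ring

end LinearizedADMM

theorem statement5_general {p q n : ℕ}
    (A : Matrix (Fin n) (Fin p) ℝ) (B : Matrix (Fin n) (Fin q) ℝ)
    (g : Vec p → Vec q → ℝ) (f : Vec p → ℝ) (h : Vec q → ℝ)
    (Lg Lh : ℝ) (hg : LipschitzDifferentiable2 g Lg) (hh : LipschitzDifferentiable h Lh)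
    (Ly β : ℝ) (hβ : 0 < β)
    (xk1 : Vec p) (yk yk1 : Vec q) (γk : Vec n)
    (hmin : ∀ y : Vec q,
      hbar g h A B β Ly xk1 yk γk yk1 ≤ hbar g h A B β Ly xk1 yk γk y) :
    Lagr β g f h A B xk1 yk γk - Lagr β g f h A B xk1 yk1 γk ≥
      (2 * Ly - (Lg + Lh)) / 2 * ‖yk - yk1‖ ^ 2 := by
  have hw := (hg.lipschitzDifferentiable_right xk1).add hh
  have hdescent := le_add_inner_gradient_add_sq hw.1 hw.2 yk yk1
  rw [gradient_fun_add (hg.2.1 xk1 yk) (hh.1 yk), norm_sub_rev, real_inner_comm] at hdescent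
  have hgap := hbar_sub_hbar_of_forall_le hmin yk
  have hk := lagr_sub_hbar A B g f h β Ly xk1 yk γk yk
  have hk1 := lagr_sub_hbar A B g f h β Ly xk1 yk γk yk1
  simp only [sub_self, norm_zero, inner_zero_left] at hk
  rw [norm_sub_rev yk1 yk, grady] at hk1
  have hB : 0 ≤ β / 2 * ‖mv B (yk - yk1)‖ ^ 2 := by positivity
  linarith

theorem statement5 {p q n : ℕ}
    (A : Matrix (Fin n) (Fin p) ℝ) (B : Matrix (Fin n) (Fin q) ℝ)
    (g : Vec p → Vec q → ℝ) (f : Vec p → ℝ) (h : Vec q → ℝ)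
    (Lg Lh : ℝ) (hg : LipschitzDifferentiable2 g Lg) (hh : LipschitzDifferentiable h Lh)
    (Ly β : ℝ) (hLy : 0 < Ly) (hβ : 0 < β)
    (xk1 : Vec p) (yk yk1 : Vec q) (γk : Vec n)
    (hmin : ∀ y : Vec q,
      hbar g h A B β Ly xk1 yk γk yk1 ≤ hbar g h A B β Ly xk1 yk γk y) :
    Lagr β g f h A B xk1 yk γk - Lagr β g f h A B xk1 yk1 γk ≥
      (2 * Ly - (Lg + Lh)) / 2 * ‖yk - yk1‖ ^ 2 :=
  statement5_general A B g f h Lg Lh hg hh Ly β hβ xk1 yk yk1 γk hmin
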